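/- Let Γ be a Neumaier graph with parameters (n,k,λ;a,c) and let E be its edge set. Then twice the number of edges of Γ satisfies 2·|E| ≥ 2k(k−λ) + 2(k−c+1)(a−1) + (k−c+1)(λ−a+1) + (c−1)(c−2); that is, Γ has at least k(k−λ) + (k−c+1)(a−1) + (k−c+1)(λ−a+1)/2 + (c−1)(c−2)/2 edges. -/

import Mathlib

open Finset SimpleGraph Matrix

/-- A finset `C` is a regular clique with nexus `a` in `G`: it is a clique and every
vertex outside `C` has exactly `a` neighbors in `C`. -/
def SimpleGraph.IsRegularCliqueWithNexus {V : Type*} [Fintype V] [DecidableEq V]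
    (G : SimpleGraph V) [DecidableRel G.Adj] (C : Finset V) (a : ℕ) : Prop :=
  G.IsClique (C : Set V) ∧ ∀ v ∉ C, (C.filter fun u => G.Adj v u).card = a

/-- `G` is edge-regular with parameters `(n, k, l)`: it has `n` vertices, is `k`-regular,
and any two adjacent vertices have exactly `l` common neighbors. -/
def SimpleGraph.IsEdgeRegular {V : Type*} [Fintype V] [DecidableEq V]
    (G : SimpleGraph V) [DecidableRel G.Adj] (n k l : ℕ) : Prop :=
  Fintype.card V = n ∧ G.IsRegularOfDegree k ∧
    ∀ u v : V, G.Adj u v → Fintype.card (G.commonNeighbors u v) = l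

/-- `G` is a Neumaier graph with parameters `(n, k, l; a, c)`: a connected, non-complete,
edge-regular graph with parameters `(n, k, l)` containing a regular clique of size `c`
with nexus `a ≥ 1`. -/
def SimpleGraph.IsNeumaier {V : Type*} [Fintype V] [DecidableEq V]
    (G : SimpleGraph V) [DecidableRel G.Adj] (n k l a c : ℕ) : Prop :=
  G.Connected ∧ G ≠ ⊤ ∧ G.IsEdgeRegular n k l ∧ 1 ≤ a ∧
    ∃ C : Finset V, C.card = c ∧ G.IsRegularCliqueWithNexus C a

/-!
For an edge `uv`, `N(u) ∪ N(v)` has `2k - λ` vertices, so `n ≥ 2k - λ` and the handshake lemma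
gives `2|E| = nk ≥ (2k - λ)k`. For `u ∈ C`, double counting the edges between `C \ {u}` and
`N(u) \ C` gives `(k - c + 1)(a - 1) = (c - 1)(λ - c + 2)`, and this relation turns `(2k - λ)k`
into the stated right-hand side.
-/

namespace SimpleGraph

variable {V : Type*} [Fintype V] {G : SimpleGraph V} [DecidableRel G.Adj]

theorem IsRegularOfDegree.two_mul_card_edgeFinset {k : ℕ} (hk : G.IsRegularOfDegree k) :
    2 * #G.edgeFinset = Fintype.card V * k := by
  rw [← sum_degrees_eq_twice_card_edges, sum_congr rfl fun v _ => hk.degree_eq v, sum_const,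
    card_univ, smul_eq_mul]

variable [DecidableEq V]

theorem card_commonNeighbors_eq_card_inter (u v : V) :
    Fintype.card (G.commonNeighbors u v) = #(G.neighborFinset u ∩ G.neighborFinset v) := by
  rw [← Set.toFinset_card]
  congr 1
  ext w
  simp only [Set.mem_toFinset, mem_commonNeighbors, mem_inter, mem_neighborFinset]

theorem IsClique.neighborFinset_inter_eq_erase {C : Finset V} (hC : G.IsClique (C : Set V))
    {u : V} (hu : u ∈ C) : G.neighborFinset u ∩ C = C.erase u := by
  ext w
  simp only [mem_inter, mem_neighborFinset, mem_erase]
  exact ⟨fun ⟨huw, hw⟩ => ⟨huw.ne', hw⟩, fun ⟨hwu, hw⟩ => ⟨hC hu hw hwu.symm, hw⟩⟩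

namespace IsEdgeRegular

variable {n k l : ℕ}

theorem card_neighborFinset_inter (hG : G.IsEdgeRegular n k l) {u v : V} (huv : G.Adj u v) :
    #(G.neighborFinset u ∩ G.neighborFinset v) = l := by
  rw [← card_commonNeighbors_eq_card_inter, hG.2.2 u v huv]

theorem two_mul_le_add (hG : G.IsEdgeRegular n k l) {u v : V} (huv : G.Adj u v) :
    2 * k ≤ n + l := by
  have hunion := card_union_add_card_inter (G.neighborFinset u) (G.neighborFinset v)
  rw [hG.card_neighborFinset_inter huv, card_neighborFinset_eq_degree,
    card_neighborFinset_eq_degree, hG.2.1.degree_eq, hG.2.1.degree_eq] at hunion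
  have := card_le_univ (G.neighborFinset u ∪ G.neighborFinset v)
  rw [hG.1] at this
  omega

end IsEdgeRegular

namespace IsRegularCliqueWithNexus

variable {C : Finset V} {a : ℕ}

theorem exists_mem_adj (hC : G.IsRegularCliqueWithNexus C a) (hG : G ≠ ⊤) (ha : 1 ≤ a) :
    ∃ u ∈ C, ∃ v, G.Adj u v := by
  obtain ⟨v, hv⟩ : ∃ v, v ∉ C := by
    by_contra! hall
    exact hG (eq_top_iff.2 fun x y hxy => hC.1 (hall x) (hall y) hxy)
  obtain ⟨u, hu⟩ := card_pos.1 (ha.trans_eq (hC.2 v hv).symm)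
  rw [mem_filter] at hu
  exact ⟨u, hu.1, v, hu.2.symm⟩

theorem mul_nexus_sub_one_eq {n k l : ℕ} (hC : G.IsRegularCliqueWithNexus C a)
    (hG : G.IsEdgeRegular n k l) {u : V} (hu : u ∈ C) :
    ((k : ℤ) - #C + 1) * ((a : ℤ) - 1) = ((#C : ℤ) - 1) * ((l : ℤ) - #C + 2) := by
  have hCu := card_erase_add_one hu
  have hD : #(G.neighborFinset u \ C) + #C = k + 1 := by
    have := card_sdiff_add_card_inter (G.neighborFinset u) C
    rw [hC.1.neighborFinset_inter_eq_erase hu, card_neighborFinset_eq_degree,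
      hG.2.1.degree_eq] at this
    omega
  set D := G.neighborFinset u \ C
  have habove : ∀ y ∈ D, (#((C.erase u).bipartiteAbove G.Adj y) : ℤ) = a - 1 := by
    intro y hy
    rw [mem_sdiff, mem_neighborFinset] at hy
    have hmem : u ∈ C.filter (fun w => G.Adj y w) := mem_filter.2 ⟨hu, hy.1.symm⟩
    have := card_erase_add_one hmem
    rw [bipartiteAbove, filter_erase, ← hC.2 y hy.2]
    omega
  have hbelow : ∀ v ∈ C.erase u, (#(D.bipartiteBelow G.Adj v) : ℤ) = l - #C + 2 := by
    intro v hv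
    obtain ⟨hvu, hvC⟩ := mem_erase.1 hv
    set W := G.neighborFinset u ∩ G.neighborFinset v
    have hW : D.bipartiteBelow G.Adj v = W \ C := by
      ext y
      simp only [bipartiteBelow, D, W, mem_filter, mem_sdiff, mem_inter, mem_neighborFinset,
        G.adj_comm v]
      tauto
    have hWC : W ∩ C = (C.erase u).erase v := by
      rw [inter_assoc, hC.1.neighborFinset_inter_eq_erase hvC, inter_erase,
        hC.1.neighborFinset_inter_eq_erase hu]
    have hsplit := card_sdiff_add_card_inter W C
    rw [hWC, hG.card_neighborFinset_inter (hC.1 hu hvC hvu.symm), ← hW] at hsplit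
    have hCuv := card_erase_add_one hv
    omega
  have hcount : ∑ y ∈ D, (#((C.erase u).bipartiteAbove G.Adj y) : ℤ) =
      ∑ v ∈ C.erase u, (#(D.bipartiteBelow G.Adj v) : ℤ) := by
    exact_mod_cast sum_card_bipartiteAbove_eq_sum_card_bipartiteBelow G.Adj
  rw [sum_congr rfl habove, sum_congr rfl hbelow, sum_const, sum_const, nsmul_eq_mul,
    nsmul_eq_mul] at hcount
  have hD' : (#D : ℤ) = k - #C + 1 := by omega
  have hCu' : (#(C.erase u) : ℤ) = #C - 1 := by omega
  rwa [← hD', ← hCu']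

end IsRegularCliqueWithNexus

end SimpleGraph

/-- Proposition 3.8: a Neumaier graph with parameters (n,k,l;a,c) has at least
k(k-l) + (k-c+1)(a-1) + (k-c+1)(l-a+1)/2 + (c-1)(c-2)/2 edges, i.e. twice the number of
edges is at least 2k(k-l) + 2(k-c+1)(a-1) + (k-c+1)(l-a+1) + (c-1)(c-2). -/
theorem neumaier_edge_lower_bound {V : Type*} [Fintype V] [DecidableEq V]
    (G : SimpleGraph V) [DecidableRel G.Adj] (n k l a c : ℕ)
    (h : G.IsNeumaier n k l a c) :
    2 * (G.edgeFinset.card : ℤ) ≥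
      2 * k * ((k : ℤ) - l) + 2 * ((k : ℤ) - c + 1) * ((a : ℤ) - 1) +
        ((k : ℤ) - c + 1) * ((l : ℤ) - a + 1) + ((c : ℤ) - 1) * ((c : ℤ) - 2) := by
  obtain ⟨-, hne, hG, ha, C, rfl, hC⟩ := h
  obtain ⟨u, hu, v, huv⟩ := hC.exists_mem_adj hne ha
  have hedges : 2 * (#G.edgeFinset : ℤ) = n * k := by
    exact_mod_cast hG.1 ▸ hG.2.1.two_mul_card_edgeFinset
  have hn : 2 * (k : ℤ) - l ≤ n := by
    have := hG.two_mul_le_add huv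
    omega
  have hrel := hC.mul_nexus_sub_one_eq hG hu
  calc _ = (2 * k - l) * (k : ℤ) := by linear_combination hrel
    _ ≤ n * k := mul_le_mul_of_nonneg_right hn k.cast_nonneg
    _ = 2 * #G.edgeFinset := hedges.symm
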